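/- Let K be a compact Hausdorff topological space, n a positive integer, and ψ : K → (Fin n → ℂ) a continuous map with ‖ψ θ‖ = 1 in the ℓ²-norm for every θ ∈ K. Then the family F of QNode expectation functions is a unital subalgebra of the real-valued functions on K: F contains every constant function K → ℝ, and F is closed under pointwise addition, pointwise multiplication, and multiplication by real scalars. -/

import Mathlib

open scoped BigOperators ComplexConjugate
open MeasureTheory Matrix

/-- The `k`-fold tensor power of the parametrized state `ψ`:
`ψ^{⊗k} θ i = ∏_{j : Fin k} ψ θ (i j)`. -/
noncomputable def tensorPow {K : Type*} {n : ℕ} (ψ : K → EuclideanSpace ℂ (Fin n))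
    (k : ℕ) (θ : K) : (Fin k → Fin n) → ℂ :=
  fun i => ∏ j : Fin k, ψ θ (i j)

/-- The family of QNode expectation functions: real parts of expectation values of Hermitian
observables (possibly on an ancilla-extended register, i.e. on a tensor power) in the state
`ψ θ`. -/
noncomputable def QNodeFamily {K : Type*} {n : ℕ}
    (ψ : K → EuclideanSpace ℂ (Fin n)) : Set (K → ℝ) :=
  { f | ∃ (k : ℕ) (A : Matrix (Fin k → Fin n) (Fin k → Fin n) ℂ),
      Aᴴ = A ∧ ∀ θ : K, f θ = (star (tensorPow ψ k θ) ⬝ᵥ A.mulVec (tensorPow ψ k θ)).re }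

/-! Constants are expectations of scalar observables on the empty register, where `ψ^{⊗0} = 1`.
Concatenating registers identifies `ψ^{⊗(k+k')}` with `ψ^{⊗k} ⊗ ψ^{⊗k'}`, so the expectation of
`A ⊗ B` factors as `⟨A⟩⟨B⟩`; both factors are real because `A` and `B` are Hermitian, which gives
products. Sums come from `A ⊗ 1 + 1 ⊗ B`, since `⟨1⟩ = ‖ψ θ‖^{2k} = 1`. -/

open scoped Kronecker

namespace Matrix

variable {R ι κ : Type*} [Fintype ι] [Fintype κ]

theorem star_dotProduct_kronecker_mulVec [CommSemiring R] [StarRing R] (A : Matrix ι ι R)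
    (B : Matrix κ κ R) (x : ι → R) (y : κ → R) :
    star (fun p : ι × κ => x p.1 * y p.2) ⬝ᵥ (A ⊗ₖ B) *ᵥ (fun p => x p.1 * y p.2)
      = (star x ⬝ᵥ A *ᵥ x) * (star y ⬝ᵥ B *ᵥ y) := by
  have hstar : star (fun p : ι × κ => x p.1 * y p.2) = fun p => star x p.1 * star y p.2 :=
    funext fun _ => star_mul' _ _
  rw [hstar]
  simp only [dotProduct, Fintype.sum_prod_type, Finset.sum_mul_sum]
  refine Finset.sum_congr rfl fun i _ => Finset.sum_congr rfl fun j _ => ?_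
  simp only [mulVec, dotProduct, kronecker_apply, Fintype.sum_prod_type, Finset.mul_sum,
    Finset.sum_mul]
  rw [Finset.sum_comm]
  exact Finset.sum_congr rfl fun _ _ => Finset.sum_congr rfl fun _ _ => by ring

theorem star_dotProduct_reindex_mulVec [NonUnitalNonAssocSemiring R] [Star R] (e : ι ≃ κ)
    (M : Matrix ι ι R) (w : κ → R) :
    star w ⬝ᵥ reindex e e M *ᵥ w = star (w ∘ e) ⬝ᵥ M *ᵥ (w ∘ e) := by
  rw [reindex_apply, submatrix_mulVec_equiv, Equiv.symm_symm, dotProduct_comp_equiv_symm]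
  rfl

omit [Fintype ι] [Fintype κ] in
theorem IsHermitian.kronecker [CommSemiring R] [StarRing R] {A : Matrix ι ι R}
    {B : Matrix κ κ R} (hA : A.IsHermitian) (hB : B.IsHermitian) : (A ⊗ₖ B).IsHermitian := by
  rw [IsHermitian, conjTranspose_kronecker, hA.eq, hB.eq]

end Matrix

theorem EuclideanSpace.star_dotProduct_self {𝕜 ι : Type*} [RCLike 𝕜] [Fintype ι]
    (w : EuclideanSpace 𝕜 ι) : star (w : ι → 𝕜) ⬝ᵥ w = (‖w‖ : 𝕜) ^ 2 := by
  rw [dotProduct_comm, ← EuclideanSpace.inner_eq_star_dotProduct, inner_self_eq_norm_sq_to_K]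

section TensorPow

variable {K : Type*} {n : ℕ} (ψ : K → EuclideanSpace ℂ (Fin n))

theorem star_tensorPow_dotProduct_self (k : ℕ) (θ : K) :
    star (tensorPow ψ k θ) ⬝ᵥ tensorPow ψ k θ = (star (ψ θ : Fin n → ℂ) ⬝ᵥ ψ θ) ^ k := by
  simp only [dotProduct, tensorPow, Pi.star_apply, star_prod, ← Finset.prod_mul_distrib]
  rw [← Fintype.prod_sum (fun (_ : Fin k) (x : Fin n) => star (ψ θ x) * ψ θ x)]
  simp

theorem tensorPow_add_comp_appendEquiv (k k' : ℕ) (θ : K) :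
    tensorPow ψ (k + k') θ ∘ Fin.appendEquiv k k'
      = fun p => tensorPow ψ k θ p.1 * tensorPow ψ k' θ p.2 := by
  funext p
  simp [tensorPow, Fin.prod_univ_add]

end TensorPow

def coupledObservable {α R : Type*} [Mul R] {k k' : ℕ} (A : Matrix (Fin k → α) (Fin k → α) R)
    (B : Matrix (Fin k' → α) (Fin k' → α) R) :
    Matrix (Fin (k + k') → α) (Fin (k + k') → α) R :=
  reindex (Fin.appendEquiv k k') (Fin.appendEquiv k k') (A ⊗ₖ B)

theorem Matrix.IsHermitian.coupledObservable {α R : Type*} [CommSemiring R] [StarRing R]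
    {k k' : ℕ} {A : Matrix (Fin k → α) (Fin k → α) R} {B : Matrix (Fin k' → α) (Fin k' → α) R}
    (hA : A.IsHermitian) (hB : B.IsHermitian) : (coupledObservable A B).IsHermitian :=
  (hA.kronecker hB).reindex _

theorem star_tensorPow_dotProduct_coupledObservable_mulVec {K : Type*} {n : ℕ}
    (ψ : K → EuclideanSpace ℂ (Fin n)) {k k' : ℕ} (A : Matrix (Fin k → Fin n) (Fin k → Fin n) ℂ)
    (B : Matrix (Fin k' → Fin n) (Fin k' → Fin n) ℂ) (θ : K) :
    star (tensorPow ψ (k + k') θ) ⬝ᵥ coupledObservable A B *ᵥ tensorPow ψ (k + k') θ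
      = (star (tensorPow ψ k θ) ⬝ᵥ A *ᵥ tensorPow ψ k θ)
        * (star (tensorPow ψ k' θ) ⬝ᵥ B *ᵥ tensorPow ψ k' θ) := by
  rw [coupledObservable, star_dotProduct_reindex_mulVec, tensorPow_add_comp_appendEquiv]
  exact star_dotProduct_kronecker_mulVec A B _ _

namespace QNodeFamily

variable {K : Type*} {n : ℕ} {ψ : K → EuclideanSpace ℂ (Fin n)}

theorem one_mem : (fun _ => 1 : K → ℝ) ∈ QNodeFamily ψ :=
  ⟨0, 1, conjTranspose_one, fun θ => by simp [star_tensorPow_dotProduct_self]⟩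

theorem smul_mem (c : ℝ) {f : K → ℝ} (hf : f ∈ QNodeFamily ψ) : c • f ∈ QNodeFamily ψ := by
  obtain ⟨k, A, hA, hfA⟩ := hf
  refine ⟨k, (c : ℂ) • A, (IsHermitian.smul hA (Complex.conj_ofReal c)).eq, fun θ => ?_⟩
  simp [smul_mulVec, hfA θ]

theorem const_mem (c : ℝ) : (fun _ => c : K → ℝ) ∈ QNodeFamily ψ := by
  simpa only [Pi.smul_def, smul_eq_mul, mul_one] using smul_mem (ψ := ψ) c one_mem

theorem mul_mem {f g : K → ℝ} (hf : f ∈ QNodeFamily ψ) (hg : g ∈ QNodeFamily ψ) :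
    f * g ∈ QNodeFamily ψ := by
  obtain ⟨k, A, hA, hfA⟩ := hf
  obtain ⟨k', B, hB, hgB⟩ := hg
  refine ⟨k + k', coupledObservable A B, (IsHermitian.coupledObservable hA hB).eq, fun θ => ?_⟩
  have hAim : (star (tensorPow ψ k θ) ⬝ᵥ A *ᵥ tensorPow ψ k θ).im = 0 :=
    IsHermitian.im_star_dotProduct_mulVec_self hA _
  have hBim : (star (tensorPow ψ k' θ) ⬝ᵥ B *ᵥ tensorPow ψ k' θ).im = 0 :=
    IsHermitian.im_star_dotProduct_mulVec_self hB _
  rw [Pi.mul_apply, star_tensorPow_dotProduct_coupledObservable_mulVec, Complex.mul_re, hAim, hBim,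
    mul_zero, sub_zero, hfA θ, hgB θ]

theorem add_mem (hψ : ∀ θ, ‖ψ θ‖ = 1) {f g : K → ℝ} (hf : f ∈ QNodeFamily ψ)
    (hg : g ∈ QNodeFamily ψ) : f + g ∈ QNodeFamily ψ := by
  obtain ⟨k, A, hA, hfA⟩ := hf
  obtain ⟨k', B, hB, hgB⟩ := hg
  have hnorm : ∀ k θ, star (tensorPow ψ k θ) ⬝ᵥ tensorPow ψ k θ = 1 := by
    simp [star_tensorPow_dotProduct_self, EuclideanSpace.star_dotProduct_self, hψ]
  refine ⟨k + k', coupledObservable A 1 + coupledObservable 1 B,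
    ((IsHermitian.coupledObservable hA isHermitian_one).add
      (IsHermitian.coupledObservable isHermitian_one hB)).eq, fun θ => ?_⟩
  simp [add_mulVec, star_tensorPow_dotProduct_coupledObservable_mulVec, hnorm, hfA θ, hgB θ]

end QNodeFamily

theorem qnodeFamily_is_unital_subalgebra_general
    {K : Type*}
    {n : ℕ} (ψ : K → EuclideanSpace ℂ (Fin n))
    (hψ_norm : ∀ θ : K, ‖ψ θ‖ = 1) :
    (∀ c : ℝ, (fun _ : K => c) ∈ QNodeFamily ψ) ∧
    (∀ f g : K → ℝ, f ∈ QNodeFamily ψ → g ∈ QNodeFamily ψ → f + g ∈ QNodeFamily ψ) ∧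
    (∀ f g : K → ℝ, f ∈ QNodeFamily ψ → g ∈ QNodeFamily ψ → f * g ∈ QNodeFamily ψ) ∧
    (∀ (c : ℝ) (f : K → ℝ), f ∈ QNodeFamily ψ → c • f ∈ QNodeFamily ψ) :=
  ⟨QNodeFamily.const_mem, fun _ _ => QNodeFamily.add_mem hψ_norm,
    fun _ _ => QNodeFamily.mul_mem, fun c _ => QNodeFamily.smul_mem c⟩

/-- Part 1 of Lemma 1: the family of QNode expectation functions is a unital subalgebra of
the real-valued functions on `K`: it contains all constants and is closed under pointwise
addition, pointwise multiplication (via ancilla coupling), and real scalar multiplication. -/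
theorem qnodeFamily_is_unital_subalgebra
    {K : Type*} [TopologicalSpace K] [CompactSpace K] [T2Space K]
    {n : ℕ} (hn : 0 < n) (ψ : K → EuclideanSpace ℂ (Fin n))
    (hψ_cont : Continuous ψ) (hψ_norm : ∀ θ : K, ‖ψ θ‖ = 1) :
    (∀ c : ℝ, (fun _ : K => c) ∈ QNodeFamily ψ) ∧
    (∀ f g : K → ℝ, f ∈ QNodeFamily ψ → g ∈ QNodeFamily ψ → f + g ∈ QNodeFamily ψ) ∧
    (∀ f g : K → ℝ, f ∈ QNodeFamily ψ → g ∈ QNodeFamily ψ → f * g ∈ QNodeFamily ψ) ∧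
    (∀ (c : ℝ) (f : K → ℝ), f ∈ QNodeFamily ψ → c • f ∈ QNodeFamily ψ) :=
  qnodeFamily_is_unital_subalgebra_general ψ hψ_norm
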